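/- Let a, b, r, C₂ ∈ ℂ with a ≠ 0. Set Ī(t) = C₂·e^{-a·t} and X̄(t) = exp((r·C₂/a)·e^{-a·t}). Define δS(t) = 0, δE(t) = 0, δI(t) = e^{-a·t}, δX(t) = (r/a)·(e^{-a·t} − 1)·X̄(t), δY(t) = 0, δZ(t) = 0. Then (δS, δE, δI, δX, δY, δZ) is a solution of the variational equation δS' = -r·Ī(t)·δS, δE' = r·Ī(t)·δS - b·δE, δI' = b·δE - a·δI, δX' = -r·X̄(t)·δI - r·Ī(t)·δX, δY' = -(r·b/a)·δE, δZ' = -(r²/a)·Ī(t)·δS on ℝ, with initial value (0, 0, 1, 0, 0, 0) at t = 0. -/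

import Mathlib

/-- `Ī(t) = C₂·e^{-a t}`. -/
noncomputable def Ibar (a C₂ : ℂ) (t : ℝ) : ℂ := C₂ * Complex.exp (-a * t)

/-- `X̄(t) = exp((r C₂ / a)·e^{-a t})`. -/
noncomputable def Xbar (a r C₂ : ℂ) (t : ℝ) : ℂ :=
  Complex.exp (r * C₂ / a * Complex.exp (-a * t))

/-- `δI(t) = e^{-a t}`. -/
noncomputable def dI (a : ℂ) (t : ℝ) : ℂ := Complex.exp (-a * t)

/-- `δX(t) = (r/a)(e^{-a t} − 1) X̄(t)`. -/
noncomputable def dX (a r C₂ : ℂ) (t : ℝ) : ℂ :=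
  r / a * (Complex.exp (-a * t) - 1) * Xbar a r C₂ t

/-! `δX = (r/a)(δI - 1) X̄` with `δI' = -a δI` and `X̄' = -r Ī X̄`, so the product rule gives
`δX' = -r δI X̄ + (r/a)(δI - 1)(-r Ī X̄) = -r X̄ δI - r Ī δX`. -/

theorem hasDerivAt_cexp_mul_ofReal (c : ℂ) (t : ℝ) :
    HasDerivAt (fun s : ℝ => Complex.exp (c * s)) (c * Complex.exp (c * t)) t := by
  simpa [mul_comm] using ((hasDerivAt_id t).ofReal_comp.const_mul c).cexp

theorem hasDerivAt_dI (a : ℂ) (t : ℝ) : HasDerivAt (dI a) (-a * dI a t) t :=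
  hasDerivAt_cexp_mul_ofReal (-a) t

theorem hasDerivAt_Xbar {a : ℂ} (ha : a ≠ 0) (r C₂ : ℂ) (t : ℝ) :
    HasDerivAt (Xbar a r C₂) (-r * Ibar a C₂ t * Xbar a r C₂ t) t := by
  refine ((hasDerivAt_dI a t).const_mul (r * C₂ / a)).cexp.congr_deriv ?_
  unfold Xbar Ibar dI
  field_simp

theorem hasDerivAt_dX {a : ℂ} (ha : a ≠ 0) (r C₂ : ℂ) (t : ℝ) :
    HasDerivAt (dX a r C₂)
      (-r * Xbar a r C₂ t * dI a t - r * Ibar a C₂ t * dX a r C₂ t) t := by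
  refine ((((hasDerivAt_dI a t).sub_const 1).const_mul (r / a)).mul
    (hasDerivAt_Xbar ha r C₂ t)).congr_deriv ?_
  unfold dX dI
  field_simp
  ring

theorem hasDerivAt_zero_of_eq {z : ℂ} (hz : z = 0) (t : ℝ) :
    HasDerivAt (fun _ : ℝ => (0 : ℂ)) z t :=
  hz ▸ hasDerivAt_const t (0 : ℂ)

/-- The third solution of the variational equation of the extended SEIR system,
with initial value `(0,0,1,0,0,0)`. -/
theorem variational_solution_three (a b r C₂ : ℂ) (ha : a ≠ 0) :
    (∀ t : ℝ,
      HasDerivAt (fun _ : ℝ => (0 : ℂ)) (-r * Ibar a C₂ t * 0) t ∧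
      HasDerivAt (fun _ : ℝ => (0 : ℂ)) (r * Ibar a C₂ t * 0 - b * 0) t ∧
      HasDerivAt (dI a) (b * 0 - a * dI a t) t ∧
      HasDerivAt (dX a r C₂)
        (-r * Xbar a r C₂ t * dI a t - r * Ibar a C₂ t * dX a r C₂ t) t ∧
      HasDerivAt (fun _ : ℝ => (0 : ℂ)) (-(r * b / a) * 0) t ∧
      HasDerivAt (fun _ : ℝ => (0 : ℂ)) (-(r ^ 2 / a) * Ibar a C₂ t * 0) t) ∧
    (0 : ℂ) = 0 ∧ (0 : ℂ) = 0 ∧ dI a 0 = 1 ∧ dX a r C₂ 0 = 0 ∧ (0 : ℂ) = 0 ∧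
    (0 : ℂ) = 0 := by
  refine ⟨fun t => ⟨?_, ?_, ?_, hasDerivAt_dX ha r C₂ t, ?_, ?_⟩,
    rfl, rfl, by simp [dI], by simp [dX], rfl, rfl⟩
  · exact hasDerivAt_zero_of_eq (mul_zero _) t
  · exact hasDerivAt_zero_of_eq (by ring) t
  · exact (hasDerivAt_dI a t).congr_deriv (by ring)
  · exact hasDerivAt_zero_of_eq (mul_zero _) t
  · exact hasDerivAt_zero_of_eq (mul_zero _) t
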